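/- arXiv:2103.10314 — 3 statements merged into one kernel-verified Lean document; each statement's English description precedes it below -/
import Mathlib

section
/- Let γ₁ ≤ γ₂ be real numbers. For every ε > 0 there exists C > 0 such that for all y, z ∈ ℝᴹ \ {0}, |y|^{γ₁}/|z|^{γ₂} ≤ C · (min(|y|,1))^{γ₁}/(min(|z|,1))^{γ₂} · exp(ε·|y−z|²). -/
open Real

private lemma core_ratio (γ₁ γ₂ : ℝ) (hγ : γ₁ ≤ γ₂) (a b t : ℝ) (ha : 1 ≤ a) (hb : 1 ≤ b)
    (ht : 0 ≤ t) (hab : a ≤ b + t) (hba : b ≤ a + t) :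
    a ^ γ₁ / b ^ γ₂ ≤ (1 + t) ^ max |γ₁| |γ₂| := by
  set K := max |γ₁| |γ₂| with hKdef
  have ha0 : (0:ℝ) < a := by linarith
  have hb0 : (0:ℝ) < b := by linarith
  have ht1 : (1:ℝ) ≤ 1 + t := by linarith
  have ht0 : (0:ℝ) < 1 + t := by linarith
  have hK : 0 ≤ K := le_max_of_le_left (abs_nonneg _)
  have hγ1K : γ₁ ≤ K := le_max_of_le_left (le_abs_self _)
  have hγ2K : -γ₂ ≤ K := le_max_of_le_right (neg_le_abs _)
  have hbpos : 0 < b ^ γ₂ := Real.rpow_pos_of_pos hb0 _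
  rcases le_or_gt 0 γ₁ with h1 | h1
  · have h2 : a ^ γ₁ ≤ b ^ γ₂ * (1+t)^K := by
      calc a ^ γ₁ ≤ (b*(1+t)) ^ γ₁ := Real.rpow_le_rpow ha0.le (by nlinarith) h1
        _ = b ^ γ₁ * (1+t)^γ₁ := Real.mul_rpow hb0.le ht0.le
        _ ≤ b ^ γ₂ * (1+t)^K :=
            mul_le_mul (Real.rpow_le_rpow_of_exponent_le hb hγ)
              (Real.rpow_le_rpow_of_exponent_le ht1 hγ1K)
              (Real.rpow_nonneg ht0.le _) hbpos.le
    rw [div_le_iff₀ hbpos]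
    linarith [h2]
  · have hA : a ^ γ₁ ≤ 1 := Real.rpow_le_one_of_one_le_of_nonpos ha h1.le
    rcases le_or_gt 0 γ₂ with h2 | h2
    · have hB : 1 ≤ b ^ γ₂ := Real.one_le_rpow hb h2
      have h3 : a ^ γ₁ / b ^ γ₂ ≤ 1 := by
        rw [div_le_one hbpos]; exact hA.trans hB
      exact h3.trans (Real.one_le_rpow ht1 hK)
    · have hbig : (a*(1+t))^γ₂ ≤ b^γ₂ :=
        Real.rpow_le_rpow_of_nonpos hb0 (by nlinarith) h2.le
      have hApos : 0 < a ^ γ₁ := Real.rpow_pos_of_pos ha0 _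
      have hmpos : 0 < (a*(1+t))^γ₂ := Real.rpow_pos_of_pos (by positivity) _
      have h4 : a ^ γ₁ / b ^ γ₂ ≤ a ^ γ₁ / (a*(1+t))^γ₂ :=
        div_le_div_of_nonneg_left hApos.le hmpos hbig
      refine h4.trans ?_
      rw [Real.mul_rpow ha0.le ht0.le, div_eq_mul_inv, mul_inv, ← Real.rpow_neg ha0.le,
        ← Real.rpow_neg ht0.le, ← mul_assoc, ← Real.rpow_add ha0]
      calc a ^ (γ₁ + -γ₂) * (1+t) ^ (-γ₂)
          ≤ 1 * (1+t) ^ K := by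
            apply mul_le_mul (Real.rpow_le_one_of_one_le_of_nonpos ha (by linarith))
              (Real.rpow_le_rpow_of_exponent_le ht1 hγ2K)
              (Real.rpow_nonneg ht0.le _) zero_le_one
        _ = (1+t) ^ K := one_mul _

private lemma poly_le_exp (K t ε : ℝ) (hK : 0 ≤ K) (ht : 0 ≤ t) (hε : 0 < ε) :
    (1 + t) ^ K ≤ Real.exp (K^2/(4*ε)) * Real.exp (ε * t^2) := by
  have h1 : (1 + t) ^ K ≤ Real.exp t ^ K :=
    Real.rpow_le_rpow (by linarith) (by linarith [Real.add_one_le_exp t]) hK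
  have h2 : Real.exp t ^ K = Real.exp (t * K) := by
    rw [Real.rpow_def_of_pos (Real.exp_pos t), Real.log_exp]
  have h3 : t * K ≤ K^2/(4*ε) + ε * t^2 := by
    have h4 : 0 < 4*ε := by linarith
    have : t*K - ε*t^2 ≤ K^2/(4*ε) := by
      rw [le_div_iff₀ h4]; nlinarith [sq_nonneg (2*ε*t - K)]
    linarith
  calc (1 + t) ^ K ≤ Real.exp (t * K) := h2 ▸ h1
    _ ≤ Real.exp (K^2/(4*ε) + ε * t^2) := Real.exp_le_exp.mpr h3
    _ = _ := Real.exp_add _ _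

/-- For `γ₁ ≤ γ₂` and every `ε > 0` there is `C > 0` such that for all
nonzero `y, z ∈ ℝᴹ`:
`‖y‖^γ₁ / ‖z‖^γ₂ ≤ C * (min ‖y‖ 1)^γ₁ / (min ‖z‖ 1)^γ₂ * exp (ε ‖y - z‖²)`. -/
theorem rpow_div_le_min_rpow_div_mul_exp (M : ℕ) (γ₁ γ₂ : ℝ) (hγ : γ₁ ≤ γ₂) :
    ∀ ε : ℝ, 0 < ε → ∃ C : ℝ, 0 < C ∧
      ∀ y z : EuclideanSpace ℝ (Fin M), y ≠ 0 → z ≠ 0 →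
        ‖y‖ ^ γ₁ / ‖z‖ ^ γ₂ ≤
          C * ((min ‖y‖ 1) ^ γ₁ / (min ‖z‖ 1) ^ γ₂) * Real.exp (ε * ‖y - z‖ ^ 2) := by
  intro ε hε
  set K := max |γ₁| |γ₂| with hKdef
  refine ⟨Real.exp (K^2/(4*ε)), Real.exp_pos _, ?_⟩
  intro y z hy hz
  have hy0 : 0 < ‖y‖ := norm_pos_iff.mpr hy
  have hz0 : 0 < ‖z‖ := norm_pos_iff.mpr hz
  set t := ‖y - z‖ with htdef
  have ht : 0 ≤ t := norm_nonneg _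
  set a := max ‖y‖ 1 with hadef
  set b := max ‖z‖ 1 with hbdef
  have ha1 : 1 ≤ a := le_max_right _ _
  have hb1 : 1 ≤ b := le_max_right _ _
  have hyz : ‖y‖ ≤ ‖z‖ + t := by
    have := norm_sub_norm_le y z; rw [← htdef] at this; linarith [abs_le.mp (abs_norm_sub_norm_le y z)]
  have hzy : ‖z‖ ≤ ‖y‖ + t := by
    linarith [abs_le.mp (abs_norm_sub_norm_le y z)]
  have hab : a ≤ b + t := max_le (hyz.trans (by gcongr; exact le_max_left _ _)) (by linarith)
  have hba : b ≤ a + t := max_le (hzy.trans (by gcongr; exact le_max_left _ _)) (by linarith)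
  have hmin_y : 0 < min ‖y‖ 1 := lt_min hy0 one_pos
  have hmin_z : 0 < min ‖z‖ 1 := lt_min hz0 one_pos
  have hfyd : ‖y‖ ^ γ₁ = (min ‖y‖ 1) ^ γ₁ * a ^ γ₁ := by
    rw [← Real.mul_rpow hmin_y.le (by positivity), min_mul_max, mul_one]
  have hfzd : ‖z‖ ^ γ₂ = (min ‖z‖ 1) ^ γ₂ * b ^ γ₂ := by
    rw [← Real.mul_rpow hmin_z.le (by positivity), min_mul_max, mul_one]
  have key : a ^ γ₁ / b ^ γ₂ ≤ Real.exp (K^2/(4*ε)) * Real.exp (ε * t^2) :=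
    (core_ratio γ₁ γ₂ hγ a b t ha1 hb1 ht hab hba).trans
      (poly_le_exp K t ε (le_max_of_le_left (abs_nonneg _)) ht hε)
  have hmy : 0 < (min ‖y‖ 1) ^ γ₁ := Real.rpow_pos_of_pos hmin_y _
  have hmz : 0 < (min ‖z‖ 1) ^ γ₂ := Real.rpow_pos_of_pos hmin_z _
  have hbp : 0 < b ^ γ₂ := Real.rpow_pos_of_pos (by linarith) _
  rw [hfyd, hfzd]
  have : (min ‖y‖ 1) ^ γ₁ * a ^ γ₁ / ((min ‖z‖ 1) ^ γ₂ * b ^ γ₂)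
      = ((min ‖y‖ 1) ^ γ₁ / (min ‖z‖ 1) ^ γ₂) * (a ^ γ₁ / b ^ γ₂) :=
    mul_div_mul_comm _ _ _ _
  rw [this]
  calc ((min ‖y‖ 1) ^ γ₁ / (min ‖z‖ 1) ^ γ₂) * (a ^ γ₁ / b ^ γ₂)
      ≤ ((min ‖y‖ 1) ^ γ₁ / (min ‖z‖ 1) ^ γ₂) * (Real.exp (K^2/(4*ε)) * Real.exp (ε * t^2)) := by
        apply mul_le_mul_of_nonneg_left key (by positivity)
    _ = Real.exp (K^2/(4*ε)) * ((min ‖y‖ 1) ^ γ₁ / (min ‖z‖ 1) ^ γ₂) * Real.exp (ε * t^2) := by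
        ring
end

section
/- Let 1 < p < ∞ and m ∈ ℝ with (m+1)/p < 1. For u in the weighted Sobolev space W^{1,p}_m(ℝ₊^{N+1}) with trace u(·,0), one has for every y > 0: ∫_{ℝᴺ} |u(x,y) − u(x,0)|^p dx ≤ C · y^{p−m−1} · ∫_{ℝᴺ×(0,y)} |∂_s u(x,s)|^p s^m dx ds. -/
open MeasureTheory Set
open scoped ENNReal

theorem trace_key (p m y : ℝ) (hp : 1 < p) (hm' : m < p - 1) (hy : 0 < y)
    (f : ℝ → ℝ) (hf : IntegrableOn f (Set.Ioo 0 y)) :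
    ENNReal.ofReal (|∫ s in Set.Ioo (0:ℝ) y, f s| ^ p) ≤
      ENNReal.ofReal (((p-1)/(p-1-m))^(p-1) * y ^ (p - m - 1)) *
        ∫⁻ s in Set.Ioo (0:ℝ) y, ENNReal.ofReal (|f s| ^ p * s ^ m) := by
  have hp0 : 0 < p := by linarith
  have hp1 : 0 < p - 1 := by linarith
  have hpm : 0 < p - 1 - m := by linarith
  have hpq : p.HolderConjugate (p/(p-1)) := Real.HolderConjugate.conjExponent hp
  set q : ℝ := p / (p - 1) with hqdef
  set r : ℝ := -m / (p - 1) with hrdef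
  have hr : -1 < r := by
    rw [hrdef, neg_div, neg_lt, neg_neg, div_lt_one hp1]; exact hm'
  have hr1 : 0 < r + 1 := by linarith
  set F : ℝ → ℝ≥0∞ := fun s => ENNReal.ofReal (|f s| * s ^ (m/p)) with hF
  set H : ℝ → ℝ≥0∞ := fun s => ENNReal.ofReal (s ^ (-(m/p))) with hH
  have hFmeas : AEMeasurable F (volume.restrict (Set.Ioo 0 y)) := by
    apply ENNReal.measurable_ofReal.comp_aemeasurable
    exact ((continuous_abs.measurable.comp_aemeasurable
      hf.aestronglyMeasurable.aemeasurable).mul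
      ((measurable_id.pow_const (m/p)).aemeasurable))
  have hHmeas : AEMeasurable H (volume.restrict (Set.Ioo 0 y)) :=
    (ENNReal.measurable_ofReal.comp (measurable_id.pow_const (-(m/p)))).aemeasurable
  -- Step 1
  have step1 : ENNReal.ofReal (|∫ s in Set.Ioo (0:ℝ) y, f s|) ≤
      ∫⁻ s in Set.Ioo (0:ℝ) y, ENNReal.ofReal (|f s|) := by
    calc ENNReal.ofReal (|∫ s in Set.Ioo (0:ℝ) y, f s|)
        ≤ ENNReal.ofReal (∫ s in Set.Ioo (0:ℝ) y, |f s|) :=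
          ENNReal.ofReal_le_ofReal (by
            simpa [Real.norm_eq_abs] using
              norm_integral_le_integral_norm (μ := volume.restrict (Set.Ioo 0 y)) f)
      _ = _ := ofReal_integral_eq_lintegral_ofReal hf.abs
          (ae_of_all _ fun s => abs_nonneg _)
  -- Step 2: Hölder
  have step2 : (∫⁻ s in Set.Ioo (0:ℝ) y, ENNReal.ofReal (|f s|)) ≤
      (∫⁻ s in Set.Ioo (0:ℝ) y, F s ^ p) ^ (1/p) *
      (∫⁻ s in Set.Ioo (0:ℝ) y, H s ^ q) ^ (1/q) := by
    refine le_trans (le_of_eq ?_) (ENNReal.lintegral_mul_le_Lp_mul_Lq _ hpq hFmeas hHmeas)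
    refine lintegral_congr_ae ?_
    filter_upwards [ae_restrict_mem measurableSet_Ioo] with s hs
    simp only [Pi.mul_apply, hF, hH]
    rw [← ENNReal.ofReal_mul (mul_nonneg (abs_nonneg _) (Real.rpow_nonneg hs.1.le _)), mul_assoc, ← Real.rpow_add hs.1]
    simp
  -- Step 3: F^p
  have hFp : (∫⁻ s in Set.Ioo (0:ℝ) y, F s ^ p) =
      ∫⁻ s in Set.Ioo (0:ℝ) y, ENNReal.ofReal (|f s| ^ p * s ^ m) := by
    refine lintegral_congr_ae ?_
    filter_upwards [ae_restrict_mem measurableSet_Ioo] with s hs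
    rw [hF, ENNReal.ofReal_rpow_of_nonneg (mul_nonneg (abs_nonneg _) (Real.rpow_nonneg hs.1.le _)) hp0.le,
      Real.mul_rpow (abs_nonneg _) (Real.rpow_nonneg hs.1.le _),
      ← Real.rpow_mul hs.1.le, div_mul_cancel₀ _ hp0.ne']
  -- Step 4: H^q integral
  have hrq : (-(m/p)) * q = r := by
    rw [hqdef, hrdef]; field_simp
  have hHq : (∫⁻ s in Set.Ioo (0:ℝ) y, H s ^ q) =
      ENNReal.ofReal (y ^ (r+1) / (r+1)) := by
    have hcong : (∫⁻ s in Set.Ioo (0:ℝ) y, H s ^ q) =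
        ∫⁻ s in Set.Ioo (0:ℝ) y, ENNReal.ofReal (s ^ r) := by
      refine lintegral_congr_ae ?_
      filter_upwards [ae_restrict_mem measurableSet_Ioo] with s hs
      rw [hH, ENNReal.ofReal_rpow_of_nonneg (Real.rpow_nonneg hs.1.le _) hpq.symm.nonneg,
        ← Real.rpow_mul hs.1.le, hrq]
    have hint : IntegrableOn (fun s : ℝ => s ^ r) (Set.Ioo 0 y) := by
      have := (intervalIntegral.intervalIntegrable_rpow' hr (a := 0) (b := y))
      exact ((intervalIntegrable_iff_integrableOn_Ioc_of_le hy.le).mp this).mono_set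
        Set.Ioo_subset_Ioc_self
    rw [hcong, ← ofReal_integral_eq_lintegral_ofReal hint
      ((ae_restrict_mem measurableSet_Ioo).mono fun s hs => Real.rpow_nonneg hs.1.le _)]
    congr 1
    rw [← integral_Ioc_eq_integral_Ioo, ← intervalIntegral.integral_of_le hy.le,
      integral_rpow (Or.inl hr), Real.zero_rpow (by linarith : r + 1 ≠ 0), sub_zero]
  -- combine
  have hq1 : 1/q * p = p - 1 := by
    rw [hqdef, one_div_div, div_mul_cancel₀ _ hp0.ne']
  have key : ENNReal.ofReal (|∫ s in Set.Ioo (0:ℝ) y, f s| ^ p) ≤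
      ((∫⁻ s in Set.Ioo (0:ℝ) y, ENNReal.ofReal (|f s| ^ p * s ^ m)) ^ (1/p) *
        ENNReal.ofReal (y ^ (r+1) / (r+1)) ^ (1/q)) ^ p := by
    rw [← ENNReal.ofReal_rpow_of_nonneg (abs_nonneg _) hp0.le]
    refine ENNReal.rpow_le_rpow ?_ hp0.le
    calc ENNReal.ofReal (|∫ s in Set.Ioo (0:ℝ) y, f s|)
        ≤ _ := step1.trans step2
      _ = _ := by rw [hFp, hHq]
  refine key.trans (le_of_eq ?_)
  rw [ENNReal.mul_rpow_of_nonneg _ _ hp0.le, ← ENNReal.rpow_mul, ← ENNReal.rpow_mul,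
    one_div_mul_cancel hp0.ne', ENNReal.rpow_one, hq1,
    ENNReal.ofReal_rpow_of_nonneg (by positivity) hp1.le, mul_comm]
  congr 2
  have hre : r + 1 = (p-1-m)/(p-1) := by
    rw [hrdef]; field_simp; ring
  have h1r : y ^ (r+1) / (r+1) = y ^ (r+1) * ((p-1)/(p-1-m)) := by
    rw [div_eq_mul_inv, hre, inv_div]
  rw [h1r, Real.mul_rpow (Real.rpow_nonneg hy.le _) (by positivity),
    ← Real.rpow_mul hy.le, mul_comm ((y:ℝ) ^ ((r+1)*(p-1)))]
  congr 2
  rw [hre, div_mul_cancel₀ _ hp1.ne']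
  ring

/-- Let `1 < p < ∞`, `(m+1)/p < 1`. There is `C > 0` (depending only on `p, m`)
such that whenever `u : ℝᴺ × (0,∞) → ℝ` has `y`-derivative `g` in the sense that for a.e. `x`,
`u(x,y) - u(x,0) = ∫₀^y g(x,s) ds` for all `y > 0`, then for every `y > 0`:
`∫_{ℝᴺ} |u(x,y) - u(x,0)|^p dx ≤ C y^{p-m-1} ∫_{ℝᴺ×(0,y)} |g(x,s)|^p s^m dx ds`. -/
theorem trace_estimate_weighted_sobolev (N : ℕ) (p m : ℝ) (hp : 1 < p) (hm : (m + 1) / p < 1) :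
    ∃ C : ℝ, 0 < C ∧ ∀ u g : (Fin N → ℝ) → ℝ → ℝ,
      (∀ᵐ x ∂(volume : Measure (Fin N → ℝ)), ∀ y > (0:ℝ),
        IntegrableOn (g x) (Set.Ioo 0 y) ∧ u x y - u x 0 = ∫ s in Set.Ioo (0:ℝ) y, g x s) →
      ∀ y > (0:ℝ),
        (∫⁻ x, ENNReal.ofReal (|u x y - u x 0| ^ p) ∂(volume : Measure (Fin N → ℝ))) ≤
          ENNReal.ofReal (C * y ^ (p - m - 1)) *
            ∫⁻ x, (∫⁻ s in Set.Ioo (0:ℝ) y, ENNReal.ofReal (|g x s| ^ p * s ^ m))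
              ∂(volume : Measure (Fin N → ℝ)) := by
  have hp0 : 0 < p := by linarith
  have hm' : m < p - 1 := by
    have := (div_lt_one hp0).mp hm; linarith
  have hC : 0 < ((p-1)/(p-1-m))^(p-1) :=
    Real.rpow_pos_of_pos (div_pos (by linarith) (by linarith)) _
  refine ⟨((p-1)/(p-1-m))^(p-1), hC, ?_⟩
  intro u g hug y hy
  calc (∫⁻ x, ENNReal.ofReal (|u x y - u x 0| ^ p)) ≤
      ∫⁻ x, ENNReal.ofReal (((p-1)/(p-1-m))^(p-1) * y ^ (p - m - 1)) *
        ∫⁻ s in Set.Ioo (0:ℝ) y, ENNReal.ofReal (|g x s| ^ p * s ^ m) := by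
        refine lintegral_mono_ae (hug.mono fun x hx => ?_)
        obtain ⟨hint, heq⟩ := hx y hy
        rw [heq]
        exact trace_key p m y hp hm' hy (g x) hint
    _ = _ := lintegral_const_mul' _ _ ENNReal.ofReal_ne_top
end

section
/- Let 1 < p < ∞, m ∈ ℝ with (m+1)/p < 1, and suppose u ∈ W^{2,p}((0,∞), y^m dy) satisfies ∂_y u / y ∈ L^p((0,∞), y^m dy). Then the trace D_y u(0) = lim_{y→0} ∂_y u(y) exists and equals 0. -/
open MeasureTheory Set Filter Topology
open scoped ENNReal

/-!
Near `0`, Hölder's inequality with the weights `y^(m/p)` and `y^(-m/p)` shows that a function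
in `L^p(y^m dy)` is Lebesgue integrable on `(0, 1)` as soon as `m + 1 < p`. Applied to `u''`, this
makes `u'(y) = u'(1) - ∫_y^1 u''` converge to some `ℓ` as `y → 0⁺`. If `ℓ ≠ 0`, then
`|u'(y)/y|^p y^m ≥ (|ℓ|/2)^p y^(m-p)` near `0`, which is not integrable there since `m - p < -1`;
this contradicts `u'/y ∈ L^p(y^m dy)`.
-/

/-- The weighted measure `y^m dy` on `(0, ∞)`. -/
noncomputable def weightedHalfLine (m : ℝ) : Measure ℝ :=
  ((volume : Measure ℝ).restrict (Set.Ioi 0)).withDensity fun y => ENNReal.ofReal (y ^ m)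

lemma lintegral_weightedHalfLine {m : ℝ} {g : ℝ → ℝ≥0∞} (hg : AEMeasurable g (weightedHalfLine m)) :
    ∫⁻ y, g y ∂weightedHalfLine m = ∫⁻ y in Ioi 0, ENNReal.ofReal (y ^ m) * g y :=
  lintegral_withDensity_eq_lintegral_mul₀' (by fun_prop) hg

lemma volume_restrict_Ioi_absolutelyContinuous_weightedHalfLine {m : ℝ} :
    volume.restrict (Ioi 0) ≪ weightedHalfLine m := by
  refine withDensity_absolutelyContinuous' (by fun_prop) ?_
  filter_upwards [self_mem_ae_restrict measurableSet_Ioi] with y hy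
  simpa using Real.rpow_pos_of_pos hy m

lemma MeasureTheory.MemLp.lintegral_weightedHalfLine_lt_top {m p : ℝ} {f : ℝ → ℝ} (hp : 0 < p)
    (hf : MemLp f (ENNReal.ofReal p) (weightedHalfLine m)) :
    ∫⁻ y in Ioi 0, ENNReal.ofReal (y ^ m) * ‖f y‖ₑ ^ p < ∞ := by
  have h := lintegral_rpow_enorm_lt_top_of_eLpNorm_lt_top (by simpa using hp) (by simp) hf.2
  rwa [ENNReal.toReal_ofReal hp.le, lintegral_weightedHalfLine
    (hf.1.aemeasurable.enorm.pow_const _)] at h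

lemma lintegral_Ioo_rpow_lt_top_iff {s b : ℝ} (hb : 0 < b) :
    ∫⁻ y in Ioo 0 b, ENNReal.ofReal (y ^ s) < ∞ ↔ -1 < s := by
  rw [← intervalIntegral.integrableOn_Ioo_rpow_iff hb, IntegrableOn, Integrable,
    and_iff_right (by fun_prop), hasFiniteIntegral_iff_ofReal]
  filter_upwards [self_mem_ae_restrict measurableSet_Ioo] with y hy
  exact Real.rpow_nonneg hy.1.le s

lemma MeasureTheory.MemLp.integrableOn_Ioo_zero {m p b : ℝ} {f : ℝ → ℝ} (hp : 1 < p)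
    (hmp : m + 1 < p) (hb : 0 < b) (hf : MemLp f (ENNReal.ofReal p) (weightedHalfLine m)) :
    IntegrableOn f (Ioo 0 b) := by
  have hp0 : 0 < p := by linarith
  have hpq : p.HolderConjugate p.conjExponent := .conjExponent hp
  set q := p.conjExponent
  have hac : volume.restrict (Ioo 0 b) ≪ weightedHalfLine m :=
    (Measure.absolutelyContinuous_of_le (Measure.restrict_mono Ioo_subset_Ioi_self le_rfl)).trans
      volume_restrict_Ioi_absolutelyContinuous_weightedHalfLine
  have hfm : AEStronglyMeasurable f (volume.restrict (Ioo 0 b)) := hf.1.mono_ac hac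
  refine ⟨hfm, ?_⟩
  set F : ℝ → ℝ≥0∞ := fun y => ‖f y‖ₑ * ENNReal.ofReal (y ^ (m / p))
  set G : ℝ → ℝ≥0∞ := fun y => ENNReal.ofReal (y ^ (-(m / p)))
  have hFG : ∫⁻ y in Ioo 0 b, ‖f y‖ₑ = ∫⁻ y in Ioo 0 b, (F * G) y := by
    refine setLIntegral_congr_fun measurableSet_Ioo fun y hy => ?_
    rw [Pi.mul_apply, mul_assoc, ← ENNReal.ofReal_mul (Real.rpow_nonneg hy.1.le _),
      ← Real.rpow_add hy.1, add_neg_cancel, Real.rpow_zero, ENNReal.ofReal_one, mul_one]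
  have hF : ∫⁻ y in Ioo 0 b, F y ^ p < ∞ := by
    refine lt_of_le_of_lt ?_ (hf.lintegral_weightedHalfLine_lt_top hp0)
    refine (setLIntegral_mono' measurableSet_Ioo fun y hy => le_of_eq ?_).trans
      (lintegral_mono_set Ioo_subset_Ioi_self)
    rw [ENNReal.mul_rpow_of_nonneg _ _ hp0.le,
      ENNReal.ofReal_rpow_of_nonneg (Real.rpow_nonneg hy.1.le _) hp0.le,
      ← Real.rpow_mul hy.1.le, div_mul_cancel₀ _ hp0.ne', mul_comm]
  have hG : ∫⁻ y in Ioo 0 b, G y ^ q < ∞ := by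
    have hexp : -(m / p) * q = -m / (p - 1) := by
      change -(m / p) * (p / (p - 1)) = _
      field_simp
    have hlt : -1 < -(m / p) * q := by
      rw [hexp, lt_div_iff₀ (by linarith)]
      linarith
    calc ∫⁻ y in Ioo 0 b, G y ^ q = ∫⁻ y in Ioo 0 b, ENNReal.ofReal (y ^ (-(m / p) * q)) :=
          setLIntegral_congr_fun measurableSet_Ioo fun y hy => by
            rw [ENNReal.ofReal_rpow_of_nonneg (Real.rpow_nonneg hy.1.le _) hpq.symm.nonneg,
              ← Real.rpow_mul hy.1.le]
      _ < ∞ := (lintegral_Ioo_rpow_lt_top_iff hb).mpr hlt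
  calc ∫⁻ y in Ioo 0 b, ‖f y‖ₑ = ∫⁻ y in Ioo 0 b, (F * G) y := hFG
    _ ≤ (∫⁻ y in Ioo 0 b, F y ^ p) ^ (1 / p) * (∫⁻ y in Ioo 0 b, G y ^ q) ^ (1 / q) :=
      ENNReal.lintegral_mul_le_Lp_mul_Lq _ hpq (hfm.aemeasurable.enorm.mul (by fun_prop))
        (by fun_prop)
    _ < ∞ := ENNReal.mul_lt_top (ENNReal.rpow_lt_top_of_nonneg (by positivity) hF.ne)
      (ENNReal.rpow_lt_top_of_nonneg (by simp [hpq.symm.nonneg]) hG.ne)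

theorem tendsto_nhdsGT_of_hasDerivAt_of_integrableOn {E : Type*} [NormedAddCommGroup E]
    [NormedSpace ℝ E] [CompleteSpace E] {f f' : ℝ → E} {a b : ℝ} (hab : a < b)
    (hderiv : ∀ x ∈ Ioc a b, HasDerivAt f (f' x) x) (hint : IntegrableOn f' (Ioo a b)) :
    Tendsto f (𝓝[>] a) (𝓝 (f b - ∫ t in a..b, f' t)) := by
  have hint' : IntegrableOn f' (uIcc a b) := by
    rwa [uIcc_of_le hab.le, integrableOn_Icc_iff_integrableOn_Ioo]
  have hftc : ∀ x ∈ Ioc a b, f x = f b - ∫ t in x..b, f' t := by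
    intro x hx
    have hsub : uIcc x b ⊆ Ioc a b := by
      rw [uIcc_of_le hx.2]
      exact fun t ht => ⟨hx.1.trans_le ht.1, ht.2⟩
    have hsub' : uIcc x b ⊆ uIcc a b := hsub.trans (uIcc_of_le hab.le ▸ Ioc_subset_Icc_self)
    rw [intervalIntegral.integral_eq_sub_of_hasDerivAt (fun t ht => hderiv t (hsub ht))
      (hint'.mono_set hsub').intervalIntegrable, sub_sub_cancel]
  have hcont : Tendsto (fun x => ∫ t in x..b, f' t) (𝓝[>] a) (𝓝 (∫ t in a..b, f' t)) := by
    have := intervalIntegral.continuousOn_primitive_interval_left hint' a left_mem_uIcc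
    rw [uIcc_of_le hab.le] at this
    exact this.tendsto.mono_left
      (nhdsWithin_Ioc_eq_nhdsGT hab ▸ nhdsWithin_mono _ Ioc_subset_Icc_self)
  refine (tendsto_const_nhds.sub hcont).congr' ?_
  filter_upwards [Ioc_mem_nhdsGT hab] with x hx
  exact (hftc x hx).symm

lemma lintegral_weighted_rpow_div_eq_top {m p ℓ : ℝ} {g : ℝ → ℝ} (hp : 0 < p)
    (hmp : m + 1 ≤ p) (hℓ : ℓ ≠ 0) (hg : Tendsto g (𝓝[>] 0) (𝓝 ℓ)) :
    ∫⁻ y in Ioi 0, ENNReal.ofReal (y ^ m) * ‖g y / y‖ₑ ^ p = ∞ := by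
  set c := |ℓ| / 2
  have hc : 0 < c := half_pos (abs_pos.mpr hℓ)
  obtain ⟨δ, hδ, hgδ⟩ := mem_nhdsGT_iff_exists_Ioo_subset.mp
    (hg.abs.eventually (eventually_gt_nhds (half_lt_self (abs_pos.mpr hℓ))))
  have hpointwise : ∀ y ∈ Ioo 0 δ,
      ENNReal.ofReal (c ^ p) * ENNReal.ofReal (y ^ (m - p))
        ≤ ENNReal.ofReal (y ^ m) * ‖g y / y‖ₑ ^ p := fun y hyδ => by
    have hy := hyδ.1
    rw [Real.enorm_eq_ofReal_abs, ENNReal.ofReal_rpow_of_nonneg (abs_nonneg _) hp.le,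
      ← ENNReal.ofReal_mul (by positivity), ← ENNReal.ofReal_mul (by positivity)]
    refine ENNReal.ofReal_le_ofReal ?_
    rw [abs_div, abs_of_pos hy, Real.div_rpow (abs_nonneg _) hy.le, Real.rpow_sub hy,
      mul_div_assoc', mul_comm, mul_div_assoc]
    gcongr
    exact (hgδ hyδ).le
  refine eq_top_iff.mpr ?_
  calc ∞ = ENNReal.ofReal (c ^ p) * ∫⁻ y in Ioo 0 δ, ENNReal.ofReal (y ^ (m - p)) := by
        rw [not_lt_top_iff.mp ((lintegral_Ioo_rpow_lt_top_iff hδ).not.mpr (by linarith)),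
          ENNReal.mul_top (ENNReal.ofReal_pos.mpr (by positivity)).ne']
    _ = ∫⁻ y in Ioo 0 δ, ENNReal.ofReal (c ^ p) * ENNReal.ofReal (y ^ (m - p)) :=
      (lintegral_const_mul _ (by fun_prop)).symm
    _ ≤ ∫⁻ y in Ioo 0 δ, ENNReal.ofReal (y ^ m) * ‖g y / y‖ₑ ^ p :=
      setLIntegral_mono' measurableSet_Ioo hpointwise
    _ ≤ _ := lintegral_mono_set Ioo_subset_Ioi_self

theorem eq_zero_of_tendsto_of_memLp_div {m p ℓ : ℝ} {g : ℝ → ℝ} (hp : 0 < p) (hmp : m + 1 ≤ p)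
    (hg : Tendsto g (𝓝[>] 0) (𝓝 ℓ))
    (hdiv : MemLp (fun y => g y / y) (ENNReal.ofReal p) (weightedHalfLine m)) : ℓ = 0 := by
  by_contra hℓ
  exact (hdiv.lintegral_weightedHalfLine_lt_top hp).ne
    (lintegral_weighted_rpow_div_eq_top hp hmp hℓ hg)

theorem deriv_trace_zero_general (p m : ℝ) (hp : 1 < p) (hm : (m + 1) / p < 1) (u : ℝ → ℝ)
    (hd2 : ∀ y ∈ Set.Ioi (0:ℝ), DifferentiableAt ℝ (deriv u) y)
    (hu'' : MemLp (deriv (deriv u)) (ENNReal.ofReal p) (weightedHalfLine m))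
    (hquot : MemLp (fun y => deriv u y / y) (ENNReal.ofReal p) (weightedHalfLine m)) :
    Tendsto (deriv u) (𝓝[>] (0:ℝ)) (𝓝 0) := by
  have hp0 : 0 < p := by linarith
  have hmp : m + 1 < p := by rwa [div_lt_one hp0] at hm
  have hlim := tendsto_nhdsGT_of_hasDerivAt_of_integrableOn one_pos
    (fun y hy => (hd2 y hy.1).hasDerivAt) (hu''.integrableOn_Ioo_zero hp hmp one_pos)
  rwa [eq_zero_of_tendsto_of_memLp_div hp0 hmp.le hlim hquot] at hlim

/-- Let `1 < p < ∞`, `(m+1)/p < 1`. If `u ∈ W^{2,p}((0,∞), y^m dy)` and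
moreover `u'/y ∈ L^p(y^m dy)`, then the trace `lim_{y→0⁺} u'(y)` exists and equals `0`. -/
theorem deriv_trace_zero (p m : ℝ) (hp : 1 < p) (hm : (m + 1) / p < 1) (u : ℝ → ℝ)
    (hd1 : ∀ y ∈ Set.Ioi (0:ℝ), DifferentiableAt ℝ u y)
    (hd2 : ∀ y ∈ Set.Ioi (0:ℝ), DifferentiableAt ℝ (deriv u) y)
    (hu : MemLp u (ENNReal.ofReal p) (weightedHalfLine m))
    (hu' : MemLp (deriv u) (ENNReal.ofReal p) (weightedHalfLine m))
    (hu'' : MemLp (deriv (deriv u)) (ENNReal.ofReal p) (weightedHalfLine m))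
    (hquot : MemLp (fun y => deriv u y / y) (ENNReal.ofReal p) (weightedHalfLine m)) :
    Tendsto (deriv u) (𝓝[>] (0:ℝ)) (𝓝 0) :=
  deriv_trace_zero_general p m hp hm u hd2 hu'' hquot
end
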